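/- If the Orlik–Solomon algebra A(G) is quadratic (A_2 = A, i.e., I is generated by its elements of degree ≤ 2), then the matroid G is line-closed: every line-closed subset of the ground set is closed. -/

import Mathlib

open ExteriorAlgebra

variable (K : Type*) [Field K] {n : ℕ}

/-- The generator `e i` of the exterior algebra `E = Λ(e_1,…,e_n)`. -/
noncomputable def gen (i : Fin n) : ExteriorAlgebra K (Fin n → K) :=
  ι K (Pi.single i 1)

/-- The monomial `e_S = e_{i_1} ∧ ⋯ ∧ e_{i_p}` for a tuple `S` given as a list. -/
noncomputable def eS (l : List (Fin n)) : ExteriorAlgebra K (Fin n → K) :=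
  (l.map (gen K)).prod

/-- `D` is the boundary map `∂`: it is linear and satisfies
`∂(e_{i_1} ∧ ⋯ ∧ e_{i_p}) = ∑ k (-1)^{k-1} e_{i_1} ∧ ⋯ ∧ ê_{i_k} ∧ ⋯ ∧ e_{i_p}`
(indexing the sum from `0`, the sign of the `k`-th term is `(-1)^k`). -/
def IsBoundary (D : ExteriorAlgebra K (Fin n → K) →ₗ[K] ExteriorAlgebra K (Fin n → K)) :
    Prop :=
  ∀ l : List (Fin n),
    D (eS K l) = ∑ k : Fin l.length, ((-1 : K) ^ (k : ℕ)) • eS K (l.eraseIdx k)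

/-- A circuit of a matroid: a minimal dependent set. -/
def IsCircuit {α : Type*} (M : Matroid α) (C : Set α) : Prop :=
  M.Dep C ∧ ∀ C' ⊂ C, ¬ M.Dep C'

/-- A simple matroid: every subset with at most two elements is independent
(no loops and no parallel points). -/
def MatroidSimple {α : Type*} (M : Matroid α) : Prop :=
  ∀ i j : α, M.Indep {i, j}

/-- The Orlik–Solomon ideal `I` of a matroid `G`: the ideal of the exterior algebra
generated by the boundaries `∂ e_S` of dependent tuples `S`. -/
noncomputable def OSIdeal (M : Matroid (Fin n))
    (D : ExteriorAlgebra K (Fin n → K) →ₗ[K] ExteriorAlgebra K (Fin n → K)) :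
    TwoSidedIdeal (ExteriorAlgebra K (Fin n → K)) :=
  TwoSidedIdeal.span
    {x | ∃ l : List (Fin n), l.Nodup ∧ M.Dep {i | i ∈ l} ∧ x = D (eS K l)}

/-- The defining relation of the Orlik–Solomon algebra `A(G) = E/I`:
each generator `∂ e_S` (`S` dependent) is set to zero. -/
def OSRel (M : Matroid (Fin n))
    (D : ExteriorAlgebra K (Fin n → K) →ₗ[K] ExteriorAlgebra K (Fin n → K)) :
    ExteriorAlgebra K (Fin n → K) → ExteriorAlgebra K (Fin n → K) → Prop :=
  fun x y => y = 0 ∧ ∃ l : List (Fin n), l.Nodup ∧ M.Dep {i | i ∈ l} ∧ x = D (eS K l)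

/-- The Orlik–Solomon algebra `A(G) = E/I`. -/
noncomputable abbrev OSAlgebra (M : Matroid (Fin n))
    (D : ExteriorAlgebra K (Fin n → K) →ₗ[K] ExteriorAlgebra K (Fin n → K)) :=
  RingQuot (OSRel K M D)

/-- The image `a_i` of the generator `e_i` in the Orlik–Solomon algebra. -/
noncomputable def aGen (M : Matroid (Fin n))
    (D : ExteriorAlgebra K (Fin n → K) →ₗ[K] ExteriorAlgebra K (Fin n → K))
    (i : Fin n) : OSAlgebra K M D :=
  RingQuot.mkAlgHom K (OSRel K M D) (gen K i)

/-- A set is line-closed if it contains the line (rank-2 flat) spanned by any two of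
its points. -/
def LineClosedSet {α : Type*} (M : Matroid α) (S : Set α) : Prop :=
  ∀ i ∈ S, ∀ j ∈ S, M.closure {i, j} ⊆ S

/-- The line-closure `ℓc(S)`: the smallest line-closed set containing `S`. -/
def lineClosure {α : Type*} (M : Matroid α) (S : Set α) : Set α :=
  ⋂₀ {T | S ⊆ T ∧ LineClosedSet M T}

/-- The `k`-adic Orlik–Solomon ideal `I_k`: the ideal generated by the homogeneous
components of `I` of degree at most `k`. -/
noncomputable def kAdicIdeal (M : Matroid (Fin n))
    (D : ExteriorAlgebra K (Fin n → K) →ₗ[K] ExteriorAlgebra K (Fin n → K)) (k : ℕ) :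
    TwoSidedIdeal (ExteriorAlgebra K (Fin n → K)) :=
  TwoSidedIdeal.span
    {x | x ∈ OSIdeal K M D ∧ ∃ j ≤ k, x ∈ ⋀[K]^j (Fin n → K)}


/-!
Suppose `S` is line-closed and `x ∈ cl S \ S`. Enumerate a basis `t₀, …, t_{p-1}` of `S` and
send `e_a` to `χ a ∈ K^p`, the indicator of the indices `j` with `a ∈ S ∩ cl {t₀, …, t_j}`.
For a dependent triple `{u, v, w}` of a simple matroid each point lies on the line through the
other two. So either two of them lie outside `S`, or the (nested) index sets of the three points
each contain the intersection of the other two, forcing two of them to be equal. Either way two of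
`χ u, χ v, χ w` agree, and the induced algebra map `E → Λ(K^p)` kills
`∂e_{uvw} = e_v e_w - e_u e_w + e_u e_v`. By simplicity these boundaries generate the components of
degree `≤ 2` of `I`, so the map kills `I_2 = I`. But `∂e_{x t₀ ⋯ t_{p-1}} ∈ I` is sent to
`χ t₀ ∧ ⋯ ∧ χ t_{p-1}` (as `χ x = 0`), and the matrix of these vectors is upper unitriangular.
-/

theorem eq_or_eq_or_eq_of_inf_le {L : Type*} [SemilatticeInf L] {a b c : L}
    (hab : a ≤ b ∨ b ≤ a) (hac : a ≤ c ∨ c ≤ a) (hbc : b ≤ c ∨ c ≤ b)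
    (ha : b ⊓ c ≤ a) (hb : a ⊓ c ≤ b) (hc : a ⊓ b ≤ c) : a = b ∨ a = c ∨ b = c := by
  rcases hab with h1 | h1 <;> rcases hac with h2 | h2 <;> rcases hbc with h3 | h3 <;>
    simp only [inf_of_le_left, inf_of_le_right, *] at ha hb hc <;>
    first
    | exact Or.inl (le_antisymm ‹_› ‹_›)
    | exact Or.inr (Or.inl (le_antisymm ‹_› ‹_›))
    | exact Or.inr (Or.inr (le_antisymm ‹_› ‹_›))

section GradedRing

variable {A σ : Type*} [Ring A] [SetLike σ A] [AddSubgroupClass σ A] (𝒜 : ℕ → σ) [GradedRing 𝒜]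

theorem TwoSidedIdeal.decompose_mem_of_mem_span (J : TwoSidedIdeal A) {m : ℕ} {G : Set A}
    (hG : ∀ g ∈ G, ∃ d, g ∈ 𝒜 d ∧ (d ≤ m → g ∈ J)) {y : A} (hy : y ∈ TwoSidedIdeal.span G)
    {k : ℕ} (hk : k ≤ m) : (DirectSum.decompose 𝒜 y k : A) ∈ J := by
  let P : TwoSidedIdeal A := .mk' {y | ∀ k ≤ m, (DirectSum.decompose 𝒜 y k : A) ∈ J}
    (fun k _ => by simp [J.zero_mem])
    (fun hx hy k hk => by simpa using J.add_mem (hx k hk) (hy k hk))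
    (fun hx k hk => by
      rw [DirectSum.decompose_neg, DFinsupp.neg_apply, NegMemClass.coe_neg]
      exact J.neg_mem (hx k hk))
    (fun {x y} hy k hk => by
      rw [DirectSum.decompose_mul, DirectSum.coe_mul_apply_eq_sum_antidiagonal]
      refine sum_mem fun ij hij => J.mul_mem_left _ _ (hy _ ?_)
      have := Finset.HasAntidiagonal.mem_antidiagonal.mp hij
      omega)
    (fun {x y} hx k hk => by
      rw [DirectSum.decompose_mul, DirectSum.coe_mul_apply_eq_sum_antidiagonal]
      refine sum_mem fun ij hij => J.mul_mem_right _ _ (hx _ ?_)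
      have := Finset.HasAntidiagonal.mem_antidiagonal.mp hij
      omega)
  have hGP : G ⊆ P := by
    intro g hg
    rw [SetLike.mem_coe, TwoSidedIdeal.mem_mk']
    intro k hk
    obtain ⟨d, hgd, hdJ⟩ := hG g hg
    by_cases hdk : d = k
    · subst hdk
      rw [DirectSum.decompose_of_mem_same 𝒜 hgd]
      exact hdJ hk
    · rw [DirectSum.decompose_of_mem_ne 𝒜 hgd hdk]
      exact J.zero_mem
  have hyP := TwoSidedIdeal.span_le.mpr hGP hy
  rw [TwoSidedIdeal.mem_mk'] at hyP
  exact hyP k hk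

end GradedRing

section ExteriorAlgebra

variable {R M : Type*} [CommRing R] [AddCommGroup M] [Module R M]

theorem ExteriorAlgebra.ι_mul_ι_sub_add_eq_zero {a b c : M} (h : a = b ∨ a = c ∨ b = c) :
    ι R b * ι R c - ι R a * ι R c + ι R a * ι R b = 0 := by
  rcases h with rfl | rfl | rfl
  · rw [sub_self, zero_add, ι_sq_zero]
  · rw [ι_sq_zero, sub_zero, ι_add_mul_swap]
  · rw [ι_sq_zero, zero_sub, neg_add_cancel]

variable (R) in
noncomputable def ExteriorAlgebra.topDet (p : ℕ) : ExteriorAlgebra R (Fin p → R) →ₗ[R] R :=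
  liftAlternating (Pi.single p Matrix.detRowAlternating)

theorem ExteriorAlgebra.topDet_ιMulti {p : ℕ} (v : Fin p → Fin p → R) :
    topDet R p (ιMulti R p v) = (Matrix.of v).det := by
  rw [topDet, liftAlternating_apply_ιMulti, Pi.single_eq_same]
  rfl

end ExteriorAlgebra

section Boundary

theorem eS_eq_ιMulti (l : List (Fin n)) :
    eS K l = ιMulti K l.length fun i => Pi.single (l.get i) 1 := by
  rw [ιMulti_apply]
  exact congrArg List.prod (List.ofFn_getElem_eq_map l _).symm

theorem eS_cons (i : Fin n) (l : List (Fin n)) : eS K (i :: l) = gen K i * eS K l :=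
  List.prod_cons

theorem eS_mem_exteriorPower (l : List (Fin n)) : eS K l ∈ ⋀[K]^l.length (Fin n → K) :=
  eS_eq_ιMulti K l ▸ ιMulti_range K _ ⟨_, rfl⟩

theorem map_eS {N : Type*} [AddCommGroup N] [Module K N] (φ : (Fin n → K) →ₗ[K] N)
    (l : List (Fin n)) :
    ExteriorAlgebra.map φ (eS K l) = ιMulti K l.length fun i => φ (Pi.single (l.get i) 1) := by
  rw [eS_eq_ιMulti, map_apply_ιMulti]
  rfl

theorem map_gen {N : Type*} [AddCommGroup N] [Module K N] (φ : (Fin n → K) →ₗ[K] N)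
    (i : Fin n) : ExteriorAlgebra.map φ (gen K i) = ι K (φ (Pi.single i 1)) :=
  map_apply_ι φ _

variable {K} {D : ExteriorAlgebra K (Fin n → K) →ₗ[K] ExteriorAlgebra K (Fin n → K)}

theorem IsBoundary.apply_nil (hD : IsBoundary K D) : D (eS K []) = 0 :=
  hD []

theorem IsBoundary.apply_cons (hD : IsBoundary K D) (i : Fin n) (l : List (Fin n)) :
    D (eS K (i :: l)) = eS K l - gen K i * D (eS K l) := by
  rw [hD, hD, Finset.mul_sum, sub_eq_add_neg, ← Finset.sum_neg_distrib]
  simp [Fin.sum_univ_succ, pow_succ, eS_cons]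

theorem IsBoundary.map_apply_cons {N : Type*} [AddCommGroup N] [Module K N] (hD : IsBoundary K D)
    {φ : (Fin n → K) →ₗ[K] N} {i : Fin n} (hi : φ (Pi.single i 1) = 0) (l : List (Fin n)) :
    ExteriorAlgebra.map φ (D (eS K (i :: l))) = ExteriorAlgebra.map φ (eS K l) := by
  rw [hD.apply_cons, map_sub, map_mul, map_gen, hi, map_zero, zero_mul, sub_zero]

theorem IsBoundary.apply_mem (hD : IsBoundary K D) (l : List (Fin n)) :
    D (eS K l) ∈ ⋀[K]^(l.length - 1) (Fin n → K) := by
  rw [hD l]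
  refine Submodule.sum_mem _ fun k _ => Submodule.smul_mem _ _ ?_
  simpa [List.length_eraseIdx] using eS_mem_exteriorPower K (l.eraseIdx k)

theorem IsBoundary.apply_triple (hD : IsBoundary K D) (u v w : Fin n) :
    D (eS K [u, v, w]) = gen K v * gen K w - gen K u * gen K w + gen K u * gen K v := by
  rw [hD.apply_cons, hD.apply_cons, hD.apply_cons, hD.apply_nil]
  simp only [eS, List.map_cons, List.map_nil, List.prod_cons, List.prod_nil]
  noncomm_ring

end Boundary

section Matroid

variable {α : Type*} {M : Matroid α}

theorem MatroidSimple.three_le_length (hM : MatroidSimple M) {l : List α}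
    (hl : M.Dep {i | i ∈ l}) : 3 ≤ l.length := by
  match l with
  | [] => exact absurd (by simp) hl.not_indep
  | [a] => exact absurd (by simpa using hM a a) hl.not_indep
  | [a, b] => exact absurd (by simpa [Set.insert_def] using hM a b) hl.not_indep
  | _ :: _ :: _ :: _ => simp

theorem MatroidSimple.mem_closure_of_dep (hM : MatroidSimple M) {u v w : α}
    (h : M.Dep (insert w {u, v})) : w ∈ M.closure {u, v} :=
  (hM u v).mem_closure_iff.mpr (Or.inl h)

end Matroid

theorem kAdicIdeal_two_le_ker {M : Matroid (Fin n)}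
    {D : ExteriorAlgebra K (Fin n → K) →ₗ[K] ExteriorAlgebra K (Fin n → K)}
    (hM : MatroidSimple M) (hD : IsBoundary K D) {N : Type*} [AddCommGroup N] [Module K N]
    (φ : (Fin n → K) →ₗ[K] N)
    (hφ : ∀ u v w, M.Dep {u, v, w} → φ (Pi.single u 1) = φ (Pi.single v 1) ∨
      φ (Pi.single u 1) = φ (Pi.single w 1) ∨ φ (Pi.single v 1) = φ (Pi.single w 1)) :
    kAdicIdeal K M D 2 ≤ TwoSidedIdeal.ker (ExteriorAlgebra.map φ) := by
  refine TwoSidedIdeal.span_le.mpr ?_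
  rintro x ⟨hxI, j, hj, hxj⟩
  rw [SetLike.mem_coe, ← DirectSum.decompose_of_mem_same (fun i : ℕ => ⋀[K]^i (Fin n → K)) hxj]
  refine TwoSidedIdeal.decompose_mem_of_mem_span (fun j => ⋀[K]^j (Fin n → K)) _ ?_ hxI hj
  rintro _ ⟨l, -, hl, rfl⟩
  refine ⟨l.length - 1, hD.apply_mem l, fun hle => ?_⟩
  have hl3 : l.length = 3 := by have := hM.three_le_length hl; omega
  obtain ⟨u, v, w, rfl⟩ := List.length_eq_three.mp hl3
  rw [TwoSidedIdeal.mem_ker, hD.apply_triple, map_add, map_sub, map_mul, map_mul, map_mul,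
    map_gen, map_gen, map_gen]
  exact ι_mul_ι_sub_add_eq_zero (hφ u v w (by simpa [Set.insert_def] using hl))

section Flag

variable {α : Type*} {M : Matroid α} {S : Set α} {p : ℕ}

open Classical in
noncomputable def flagVec (R : Type*) [Zero R] [One R] (M : Matroid α) (S : Set α)
    (t : Fin p → α) (a : α) : Fin p → R :=
  fun j => if a ∈ S ∧ a ∈ M.closure (t '' Set.Iic j) then 1 else 0

variable {R : Type*} [Zero R] [One R]

theorem flagVec_of_notMem (t : Fin p → α) {a : α} (ha : a ∉ S) : flagVec R M S t a = 0 :=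
  funext fun _ => if_neg fun h => ha h.1

theorem flagVec_eq_or_eq_or_eq (hS : LineClosedSet M S) (t : Fin p → α) {u v w : α}
    (hu : u ∈ M.closure {v, w}) (hv : v ∈ M.closure {u, w}) (hw : w ∈ M.closure {u, v}) :
    flagVec R M S t u = flagVec R M S t v ∨ flagVec R M S t u = flagVec R M S t w ∨
      flagVec R M S t v = flagVec R M S t w := by
  let U (a : α) : Set (Fin p) := {j | a ∈ M.closure (t '' Set.Iic j)}
  have hU : ∀ a, IsUpperSet (U a) := fun a i j hij hi =>
    M.closure_subset_closure (Set.image_mono (Set.Iic_subset_Iic.mpr hij)) hi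
  have hinter : ∀ {a b c}, a ∈ M.closure {b, c} → U b ⊓ U c ≤ U a := fun ha _ hbc =>
    M.closure_subset_closure_of_subset_closure (Set.pair_subset hbc.1 hbc.2) ha
  have hUeq : ∀ {a b}, a ∈ S → b ∈ S → U a = U b → flagVec R M S t a = flagVec R M S t b :=
    fun ha hb h => funext fun j => by
      classical
      exact if_congr (and_congr (iff_of_true ha hb) (Set.ext_iff.mp h j)) rfl rfl
  have h0 : ∀ {a b}, a ∉ S → b ∉ S → flagVec R M S t a = flagVec R M S t b := fun ha hb =>
    (flagVec_of_notMem t ha).trans (flagVec_of_notMem t hb).symm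
  by_cases hu' : u ∈ S <;> by_cases hv' : v ∈ S <;> by_cases hw' : w ∈ S
  · rcases eq_or_eq_or_eq_of_inf_le ((hU u).total (hU v)) ((hU u).total (hU w))
      ((hU v).total (hU w)) (hinter hu) (hinter hv) (hinter hw) with h | h | h
    · exact Or.inl (hUeq hu' hv' h)
    · exact Or.inr (Or.inl (hUeq hu' hw' h))
    · exact Or.inr (Or.inr (hUeq hv' hw' h))
  · exact absurd (hS u hu' v hv' hw) hw'
  · exact absurd (hS u hu' w hw' hv) hv'
  · exact Or.inr (Or.inr (h0 hv' hw'))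
  · exact absurd (hS v hv' w hw' hu) hu'
  · exact Or.inr (Or.inl (h0 hu' hw'))
  · exact Or.inl (h0 hu' hv')
  · exact Or.inl (h0 hu' hv')

theorem MatroidSimple.flagVec_eq_or_eq_or_eq_of_dep (hM : MatroidSimple M)
    (hS : LineClosedSet M S) (t : Fin p → α) {u v w : α} (h : M.Dep {u, v, w}) :
    flagVec R M S t u = flagVec R M S t v ∨ flagVec R M S t u = flagVec R M S t w ∨
      flagVec R M S t v = flagVec R M S t w := by
  refine flagVec_eq_or_eq_or_eq hS t (hM.mem_closure_of_dep h) (hM.mem_closure_of_dep ?_)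
    (hM.mem_closure_of_dep ?_)
  · rwa [Set.insert_comm v u]
  · rwa [Set.insert_comm w u, Set.pair_comm w v]

theorem flagVec_apply_self {t : Fin p → α} (ht : Function.Injective t)
    (hind : M.Indep (Set.range t)) (hS : Set.range t ⊆ S) (i j : Fin p) :
    flagVec R M S t (t i) j = if i ≤ j then 1 else 0 := by
  classical
  refine if_congr (and_iff_right (hS ⟨i, rfl⟩) |>.trans ⟨fun h => ?_, fun hij => ?_⟩) rfl rfl
  · by_contra hij
    refine hind.notMem_closure_sdiff_of_mem ⟨i, rfl⟩ (M.closure_subset_closure ?_ h)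
    rintro _ ⟨k, hk, rfl⟩
    exact ⟨⟨k, rfl⟩, fun hki => hij (ht hki ▸ hk)⟩
  · exact M.mem_closure_of_mem ⟨i, hij, rfl⟩
      ((Set.image_subset_range _ _).trans hind.subset_ground)

theorem det_flagVec {R : Type*} [CommRing R] {t : Fin p → α} (ht : Function.Injective t)
    (hind : M.Indep (Set.range t)) (hS : Set.range t ⊆ S) :
    (Matrix.of fun i => flagVec R M S t (t i)).det = 1 := by
  rw [Matrix.det_of_isUpperTriangular fun i j hji => ?_]
  · simp [flagVec_apply_self ht hind hS]
  · simp [flagVec_apply_self ht hind hS, (not_le.mpr hji : ¬i ≤ j)]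

end Flag

/-- if the Orlik–Solomon algebra is quadratic (`I` is generated by its
elements of degree ≤ 2, i.e. `I_2 = I`), then the matroid is line-closed: every
line-closed subset is a flat. -/
theorem line_closed_of_quadratic (M : Matroid (Fin n)) (hE : M.E = Set.univ)
    (hsimple : MatroidSimple M)
    (D : ExteriorAlgebra K (Fin n → K) →ₗ[K] ExteriorAlgebra K (Fin n → K))
    (hD : IsBoundary K D)
    (hquad : ∀ x, x ∈ kAdicIdeal K M D 2 ↔ x ∈ OSIdeal K M D) :
    ∀ S : Set (Fin n), LineClosedSet M S → M.IsFlat S := by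
  intro S hS
  have hSE : S ⊆ M.E := hE ▸ Set.subset_univ S
  refine Matroid.isFlat_iff_closure_eq.mpr ((M.subset_closure S).antisymm' fun x hx => ?_)
  by_contra hxS
  obtain ⟨T, hT⟩ := M.exists_isBasis S
  obtain ⟨l, hl, rfl⟩ : ∃ l : List (Fin n), l.Nodup ∧ {i | i ∈ l} = T :=
    ⟨T.toFinite.toFinset.toList, Finset.nodup_toList _, by ext; simp⟩
  rw [← Set.range_list_get] at hT
  set χ := flagVec K M S l.get
  have hχ (a : Fin n) : Fintype.linearCombination K χ (Pi.single a 1) = χ a := by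
    rw [Fintype.linearCombination_apply_single, one_smul]
  have hχx : χ x = 0 := flagVec_of_notMem _ hxS
  have hxl : D (eS K (x :: l)) ∈ OSIdeal K M D := by
    have hxT : x ∉ Set.range l.get := fun h => hxS (hT.subset h)
    have hdep := hT.indep.insert_dep_iff.mpr ⟨hT.closure_eq_closure ▸ hx, hxT⟩
    rw [Set.range_list_get] at hdep hxT
    refine TwoSidedIdeal.subset_span ⟨x :: l, hl.cons hxT, ?_, rfl⟩
    simpa [Set.insert_def] using hdep
  have hker := kAdicIdeal_two_le_ker K hsimple hD (Fintype.linearCombination K χ)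
    (fun u v w h => by simpa only [hχ] using hsimple.flagVec_eq_or_eq_or_eq_of_dep hS l.get h)
    ((hquad _).mpr hxl)
  rw [TwoSidedIdeal.mem_ker, hD.map_apply_cons (by rw [hχ, hχx]), map_eS] at hker
  have hdet := congrArg (topDet K l.length) hker
  simp only [hχ, topDet_ιMulti, map_zero] at hdet
  exact one_ne_zero
    ((det_flagVec (List.nodup_iff_injective_get.mp hl) hT.indep hT.subset).symm.trans hdet)
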